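/- The assignment sending a k⟨X,Y⟩-module (V; X, Y) to the representation of the quiver Δ (one sink 1, two sources 2, 3, with one arrow α : 2 → 1 and two arrows β, γ : 3 → 1) given by V₁ = V ⊕ V, V₂ = V, V₃ = V ⊕ V, α = (1,0)ᵀ, β = id, γ = [[0, X],[1, Y]] is a fully faithful exact functor from finite-dimensional k⟨X,Y⟩-modules to representations of Δ. -/

import Mathlib

/-- A representation of the quiver `Δ` with vertices `1` (sink), `2`, `3` (sources),
one arrow `α : 2 → 1` and two arrows `β, γ : 3 → 1`. -/
structure DeltaRep (k : Type) [Field k] : Type 1 where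
  V1 : Type
  V2 : Type
  V3 : Type
  [ac1 : AddCommGroup V1]
  [ac2 : AddCommGroup V2]
  [ac3 : AddCommGroup V3]
  [mo1 : Module k V1]
  [mo2 : Module k V2]
  [mo3 : Module k V3]
  α : V2 →ₗ[k] V1
  β : V3 →ₗ[k] V1
  γ : V3 →ₗ[k] V1

attribute [instance] DeltaRep.ac1 DeltaRep.ac2 DeltaRep.ac3
attribute [instance] DeltaRep.mo1 DeltaRep.mo2 DeltaRep.mo3

/-- A morphism of representations of the quiver `Δ`. -/
@[ext] structure DeltaHom {k : Type} [Field k] (M N : DeltaRep k) where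
  f1 : M.V1 →ₗ[k] N.V1
  f2 : M.V2 →ₗ[k] N.V2
  f3 : M.V3 →ₗ[k] N.V3
  commα : f1 ∘ₗ M.α = N.α ∘ₗ f2
  commβ : f1 ∘ₗ M.β = N.β ∘ₗ f3
  commγ : f1 ∘ₗ M.γ = N.γ ∘ₗ f3

/-- The representation `G(V; X, Y)` of `Δ`: `V₁ = V ⊕ V`, `V₂ = V`, `V₃ = V ⊕ V`,
`α = (1,0)ᵀ`, `β = id`, `γ = [[0, X],[1, Y]]`. -/
def Gobj (k : Type) [Field k] (V : Type) [AddCommGroup V] [Module k V]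
    (X Y : V →ₗ[k] V) : DeltaRep k where
  V1 := V × V
  V2 := V
  V3 := V × V
  α := LinearMap.inl k V V
  β := LinearMap.id
  γ := LinearMap.prod (X ∘ₗ LinearMap.snd k V V)
        (LinearMap.fst k V V + Y ∘ₗ LinearMap.snd k V V)

/-- The action of `G` on a morphism of `k⟨X,Y⟩`-modules. -/
def Gmap (k : Type) [Field k] (V V' : Type) [AddCommGroup V] [Module k V]
    [AddCommGroup V'] [Module k V'] (X Y : V →ₗ[k] V) (X' Y' : V' →ₗ[k] V')
    (f : V →ₗ[k] V') (hX : f ∘ₗ X = X' ∘ₗ f) (hY : f ∘ₗ Y = Y' ∘ₗ f) :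
    DeltaHom (Gobj k V X Y) (Gobj k V' X' Y') where
  f1 := f.prodMap f
  f2 := f
  f3 := f.prodMap f
  commα := by
    apply LinearMap.ext; intro v
    show (f.prodMap f) (LinearMap.inl k V V v) = LinearMap.inl k V' V' (f v)
    simp
  commβ := by
    apply LinearMap.ext; intro v
    rfl
  commγ := by
    apply LinearMap.ext; rintro ⟨v1, v2⟩
    have h1 := LinearMap.congr_fun hX v2
    have h2 := LinearMap.congr_fun hY v2
    show (f.prodMap f) (((X ∘ₗ LinearMap.snd k V V).prod
        (LinearMap.fst k V V + Y ∘ₗ LinearMap.snd k V V)) (v1, v2)) =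
      ((X' ∘ₗ LinearMap.snd k V' V').prod
        (LinearMap.fst k V' V' + Y' ∘ₗ LinearMap.snd k V' V')) (f v1, f v2)
    simp [Gobj, LinearMap.prod_apply] at h1 h2 ⊢
    exact ⟨h1, h2⟩

/-- The assignment `(V; X, Y) ↦ G(V; X, Y)` is a fully faithful exact functor from
finite-dimensional `k⟨X,Y⟩`-modules to representations of the quiver `Δ`. -/
theorem G_fully_faithful_exact
    (k : Type) [Field k] :
    (∀ (V V' : Type) (_ : AddCommGroup V) (_ : Module k V)
        (_ : AddCommGroup V') (_ : Module k V')
        (_ : FiniteDimensional k V) (_ : FiniteDimensional k V')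
        (X Y : V →ₗ[k] V) (X' Y' : V' →ₗ[k] V'),
      Function.Bijective
        (fun f : {f : V →ₗ[k] V' // f ∘ₗ X = X' ∘ₗ f ∧ f ∘ₗ Y = Y' ∘ₗ f} =>
          Gmap k V V' X Y X' Y' f.1 f.2.1 f.2.2)) ∧
    (∀ (V V' V'' : Type) (_ : AddCommGroup V) (_ : Module k V)
        (_ : AddCommGroup V') (_ : Module k V')
        (_ : AddCommGroup V'') (_ : Module k V'')
        (f : V →ₗ[k] V') (g : V' →ₗ[k] V''),
      Function.Exact f g →
        Function.Exact (f.prodMap f) (g.prodMap g)) := by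
  constructor
  · intro V V' _ _ _ _ _ _ X Y X' Y'
    constructor
    · rintro ⟨f, hf⟩ ⟨g, hg⟩ h
      exact Subtype.ext (congrArg DeltaHom.f2 h)
    · intro φ
      set f := φ.f2 with hfdef
      have hα : ∀ v : V, φ.f1 (v, 0) = (f v, 0) := by
        intro v
        have := LinearMap.congr_fun φ.commα v
        exact this
      have hβ : φ.f1 = φ.f3 := by
        have := φ.commβ
        exact LinearMap.ext fun p => LinearMap.congr_fun this p
      have hγ : ∀ p : V × V, φ.f1 (X p.2, p.1 + Y p.2)
          = (X' (φ.f1 p).2, (φ.f1 p).1 + Y' (φ.f1 p).2) := by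
        intro p
        have h := LinearMap.congr_fun φ.commγ p
        rw [← hβ] at h
        exact h
      have hγ0 : ∀ v : V, φ.f1 (0, v) = (0, f v) := by
        intro v
        have := hγ (v, 0)
        simp [hα v] at this
        simpa using (show φ.f1 (0, v) = (0, f v + 0) from this)
      have h1 : ∀ p : V × V, φ.f1 p = (f p.1, f p.2) := by
        rintro ⟨v, w⟩
        have e : ((v, w) : V × V) = (v, 0) + (0, w) := by simp
        rw [e]
        erw [map_add, hα, hγ0, Prod.mk_add_mk]
        exact Prod.ext ((add_zero (@id V' (f v))).trans (congrArg f (add_zero v).symm))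
          ((zero_add (@id V' (f w))).trans (congrArg f (zero_add w).symm))
      have hXY : ∀ w : V, f (X w) = X' (f w) ∧ f (Y w) = Y' (f w) := by
        intro w
        have := hγ (0, w)
        simp only [h1] at this
        have this : (@id V' (f (X w)), @id V' (f ((0:V) + Y w))) =
            (@id V' (X' (f w)), @id V' (f (0:V)) + Y' (f w)) := this
        obtain ⟨e1, e2⟩ := Prod.ext_iff.mp this
        have hz : @id V' (f (0:V)) = 0 := f.map_zero
        exact ⟨e1, by rw [hz] at e2; simp only [zero_add, id] at e2; exact e2⟩
      have hX : f ∘ₗ X = X' ∘ₗ f := LinearMap.ext fun w => (hXY w).1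
      have hY : f ∘ₗ Y = Y' ∘ₗ f := LinearMap.ext fun w => (hXY w).2
      refine ⟨⟨f, hX, hY⟩, ?_⟩
      have hf1 : (f.prodMap f : V × V →ₗ[k] V' × V') = φ.f1 :=
        LinearMap.ext fun p => ((h1 p).symm)
      ext x
      · exact LinearMap.congr_fun hf1 x
      · rfl
      · exact (LinearMap.congr_fun hf1 x).trans (LinearMap.congr_fun hβ x)
  · intro V V' V'' _ _ _ _ _ _ f g hfg
    intro p
    constructor
    · intro hp
      simp only [LinearMap.prodMap_apply, Prod.ext_iff, Prod.fst_zero, Prod.snd_zero] at hp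
      obtain ⟨h1, h2⟩ := hp
      obtain ⟨a, ha⟩ := (hfg p.1).mp h1
      obtain ⟨b, hb⟩ := (hfg p.2).mp h2
      exact ⟨(a, b), by simp [LinearMap.prodMap_apply, ha, hb]⟩
    · rintro ⟨⟨a, b⟩, rfl⟩
      simp [LinearMap.prodMap_apply, Prod.ext_iff,
        (hfg (f a)).mpr ⟨a, rfl⟩, (hfg (f b)).mpr ⟨b, rfl⟩]
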